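/- Fix an integer s ≥ 2. Let a = (2s−1,2s)(4s−1,4s) and b = (1,3,5,…,4s−1,2,4,6,…,4s) in Sym(4s), and R = ⟨a,b⟩. Then the subgroup N = ⟨a, a^b, a^{b²}, …, a^{b^{s−1}}⟩ is an internal direct product of the s groups ⟨a^{b^i}⟩ (0 ≤ i ≤ s−1), each of order 2, so N ≅ C₂^s; N is normal in R; and R/N is cyclic of order 2s generated by bN. In particular |R| = 2^{s+1}·s. -/

import Mathlib

/-!
Number the points along the `4s`-cycle `b`, so that `b` becomes the rotation `p ↦ p + 1` of
`ℤ/4s`. Writing `τ p` for the swap of the antipodal positions `p` and `p + 2s`, we get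
`a = τ (s-1) * τ (2s-1)` and `a^{b^i} = τ (s-1+i) * τ (2s-1+i)`. For `0 ≤ i < s` these are
commuting involutions, and `a^{b^i}` is the only one of them moving position `s-1+i`; this makes
`N` elementary abelian of rank `s`. Since `a^{b^s} = a`, conjugation by `b` permutes the
generators of `N` cyclically, so `N` is normalized by `b` and `R = ⟨b⟩N`. Every element of `R`
shifts the antipodal pairs, i.e. the positions mod `2s`, by a constant: this gives a
homomorphism `R → ℤ/2s` with `b ↦ 1`, whose kernel is `N` because the product of all the
`a^{b^i}`, `0 ≤ i < s`, is `b^{2s}`. Hence `|R| = 2s · 2^s`.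
-/

open Equiv Subgroup
open scoped Pointwise

section SeparatedInvolutions

variable {G α ι : Type*} [Group G] [MulAction G α] {g : ι → G} {x : ι → α}

theorem iSupIndep_zpowers_of_separated (horder : ∀ i, orderOf (g i) = 2)
    (hmove : ∀ i, g i • x i ≠ x i) (hfix : ∀ i j, j ≠ i → g j • x i = x i) :
    iSupIndep fun i => zpowers (g i) := by
  intro i
  have hle : (⨆ j, ⨆ (_ : j ≠ i), zpowers (g j)) ≤ MulAction.stabilizer G (x i) :=
    iSup₂_le fun j hj => (zpowers_le (H := MulAction.stabilizer G _)).mpr (hfix i j hj)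
  refine Disjoint.mono_right hle (disjoint_def.mpr fun {y} hy hyx => ?_)
  obtain ⟨k, rfl⟩ := hy
  dsimp only at hyx ⊢
  rw [← zpow_mod_orderOf, horder, Nat.cast_ofNat] at hyx ⊢
  rcases Int.emod_two_eq_zero_or_one k with h | h <;> rw [h] at hyx ⊢
  · exact zpow_zero _
  · exact absurd (by simpa using hyx) (hmove i)

theorem nonempty_closure_range_mulEquiv_of_separated [Fintype ι]
    (hcomm : Pairwise fun i j => Commute (g i) (g j)) (horder : ∀ i, orderOf (g i) = 2)
    (hmove : ∀ i, g i • x i ≠ x i) (hfix : ∀ i j, j ≠ i → g j • x i = x i) :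
    Nonempty (closure (Set.range g) ≃* Multiplicative (ι → ZMod 2)) := by
  have hcommH : Pairwise fun i j => ∀ y z : G, y ∈ zpowers (g i) → z ∈ zpowers (g j) →
      Commute y z := by
    rintro i j hij _ _ ⟨k, rfl⟩ ⟨l, rfl⟩
    exact (hcomm hij).zpow_zpow k l
  have hrange : (noncommPiCoprod hcommH).range = closure (Set.range g) := by
    rw [noncommPiCoprod_range, ← Set.iUnion_singleton_eq_range, Subgroup.closure_iUnion]
    simp only [zpowers_eq_closure]
  have hC₂ (i : ι) : Multiplicative (ZMod 2) ≃* zpowers (g i) :=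
    zmodMulEquivOfGenerator (g := ⟨g i, mem_zpowers _⟩)
      (by rintro ⟨_, k, rfl⟩; exact ⟨k, Subtype.ext (by simp)⟩)
      (by rw [Nat.card_zpowers, horder])
  exact ⟨((((MulEquiv.piMultiplicative _).trans (MulEquiv.piCongrRight hC₂)).trans
    (MonoidHom.ofInjective (injective_noncommPiCoprod_of_iSupIndep
      (iSupIndep_zpowers_of_separated horder hmove hfix)))).trans
    (MulEquiv.subgroupCongr hrange)).symm⟩

end SeparatedInvolutions

section Fiber

variable {α β : Type*} {f : α → β}

variable (f) in
def fiberSubgroup : Subgroup (Perm α) where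
  carrier := {σ | ∀ x, f (σ x) = f x}
  one_mem' _ := rfl
  mul_mem' hσ hτ x := (hσ _).trans (hτ x)
  inv_mem' {σ} hσ x := by simpa using (hσ (σ⁻¹ x)).symm

theorem swap_mem_fiberSubgroup [DecidableEq α] {x y : α} (h : f x = f y) :
    swap x y ∈ fiberSubgroup f := fun z => by
  rw [swap_apply_def]
  split_ifs with hx hy
  · rw [hx, h]
  · rw [hy, h]
  · rfl

end Fiber

section Shift

variable {α A : Type*} [AddCommGroup A] {f : α → A}

variable (f) in
def shiftSubgroup : Subgroup (Perm α) where
  carrier := {σ | ∃ c, ∀ x, f (σ x) = f x + c}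
  one_mem' := ⟨0, fun _ => (add_zero _).symm⟩
  mul_mem' := by
    rintro σ τ ⟨c, hσ⟩ ⟨d, hτ⟩
    exact ⟨d + c, fun x => by rw [Perm.mul_apply, hσ, hτ, add_assoc]⟩
  inv_mem' := by
    rintro σ ⟨c, hσ⟩
    exact ⟨-c, fun x => by
      simpa [sub_eq_add_neg] using congrArg (· - c) (hσ (σ⁻¹ x)).symm⟩

theorem fiberSubgroup_le_shiftSubgroup : fiberSubgroup f ≤ shiftSubgroup f :=
  fun _ hσ => ⟨0, fun x => by rw [add_zero, hσ x]⟩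

variable (f) in
def shiftHom (x₀ : α) : shiftSubgroup f →* Multiplicative A where
  toFun σ := Multiplicative.ofAdd (f ((σ : Perm α) x₀) - f x₀)
  map_one' := by simp
  map_mul' := by
    rintro ⟨σ, c, hσ⟩ ⟨τ, d, hτ⟩
    simp only [Subgroup.coe_mul, Perm.mul_apply, hσ, hτ, ← ofAdd_add]
    congr 1
    abel

theorem shiftHom_apply {σ : shiftSubgroup f} {c : A} (hσ : ∀ x, f ((σ : Perm α) x) = f x + c)
    (x₀ : α) : shiftHom f x₀ σ = Multiplicative.ofAdd c := by
  simp [shiftHom, hσ]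

end Shift

namespace CycleDoubleSwaps

variable {s : ℕ} [NeZero s]

/-- The point at position `p` of the cycle `(0 2 4 … 4s-2 1 3 … 4s-1)`; only `p mod 4s`
matters. -/
def pt (s : ℕ) [NeZero s] (p : ℕ) : Fin (4 * s) :=
  ⟨if p % (4 * s) < 2 * s then 2 * (p % (4 * s)) else 2 * (p % (4 * s) - 2 * s) + 1, by
    have := Nat.mod_lt p (Nat.pos_of_neZero (4 * s))
    split <;> omega⟩

theorem pt_eq_pt_iff {p q : ℕ} : pt s p = pt s q ↔ p % (4 * s) = q % (4 * s) := by
  refine ⟨fun h => ?_, fun h => by simp only [pt, h]⟩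
  have hp := Nat.mod_lt p (Nat.pos_of_neZero (4 * s))
  have hq := Nat.mod_lt q (Nat.pos_of_neZero (4 * s))
  simp only [pt, Fin.mk.injEq] at h
  split_ifs at h <;> omega

theorem pt_add_four_mul (p : ℕ) : pt s (p + 4 * s) = pt s p :=
  pt_eq_pt_iff.mpr (Nat.add_mod_right p _)

theorem pt_add_two_mul_add_two_mul (p : ℕ) : pt s (p + 2 * s + 2 * s) = pt s p := by
  rw [add_assoc, ← two_mul, ← mul_assoc]
  exact pt_add_four_mul p

theorem pt_ne_pt {p q : ℕ} (hpq : p ≠ q) (hp : p < q + 4 * s) (hq : q < p + 4 * s) :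
    pt s p ≠ pt s q := by
  rw [Ne, pt_eq_pt_iff]
  intro h
  rcases Nat.lt_or_gt_of_ne hpq with hlt | hlt
  · have := Nat.le_of_dvd (by omega) ((Nat.modEq_iff_dvd' hlt.le).mp h); omega
  · have := Nat.le_of_dvd (by omega) ((Nat.modEq_iff_dvd' hlt.le).mp h.symm); omega

theorem exists_pt_eq (m : ℕ) (x : Fin (4 * s)) :
    ∃ q, m ≤ q ∧ q < m + 4 * s ∧ pt s q = x := by
  have hinj : Function.Injective fun j : Fin (4 * s) => pt s (m + j) := fun j k h => by
    by_contra hjk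
    exact pt_ne_pt (by omega) (by omega) (by omega) h
  obtain ⟨j, rfl⟩ := (Finite.injective_iff_surjective.mp hinj) x
  exact ⟨m + j, by omega, by omega, rfl⟩

/-- The position of `x` on the cycle, modulo `2s`: the blocks are the antipodal pairs. -/
def block (x : Fin (4 * s)) : ZMod (2 * s) :=
  ((if (x : ℕ) % 2 = 0 then (x : ℕ) / 2 else 2 * s + (x : ℕ) / 2 : ℕ) : ZMod (2 * s))

theorem block_pt (p : ℕ) : block (pt s p) = p := by
  have hp := Nat.mod_lt p (Nat.pos_of_neZero (4 * s))
  have h : (if (pt s p : ℕ) % 2 = 0 then (pt s p : ℕ) / 2 else 2 * s + (pt s p : ℕ) / 2) =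
      p % (4 * s) := by
    simp only [pt]
    split_ifs <;> omega
  rw [block, h, ZMod.natCast_eq_natCast_iff', Nat.mod_mod_of_dvd _ ⟨2, by ring⟩]

def antipodalSwap (s : ℕ) [NeZero s] (p : ℕ) : Perm (Fin (4 * s)) :=
  swap (pt s p) (pt s (p + 2 * s))

theorem antipodalSwap_apply_left (p : ℕ) :
    antipodalSwap s p (pt s p) = pt s (p + 2 * s) :=
  swap_apply_left _ _

theorem antipodalSwap_apply_right (p : ℕ) :
    antipodalSwap s p (pt s (p + 2 * s)) = pt s p :=
  swap_apply_right _ _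

theorem antipodalSwap_apply_of_ne {p q : ℕ} (h₁ : q ≠ p) (h₂ : q ≠ p + 2 * s)
    (h₃ : p < q + 2 * s) (h₄ : q < p + 4 * s) : antipodalSwap s p (pt s q) = pt s q :=
  swap_apply_of_ne_of_ne (pt_ne_pt h₁ (by omega) (by omega)) (pt_ne_pt h₂ (by omega) (by omega))

theorem antipodalSwap_add_two_mul (p : ℕ) :
    antipodalSwap s (p + 2 * s) = antipodalSwap s p := by
  rw [antipodalSwap, antipodalSwap, pt_add_two_mul_add_two_mul, swap_comm]

theorem commute_antipodalSwap {p q : ℕ} (hpq : p ≠ q) (hp : p < q + 2 * s)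
    (hq : q < p + 2 * s) : Commute (antipodalSwap s p) (antipodalSwap s q) := by
  refine (Perm.disjoint_swap_swap ?_).commute
  simp only [List.nodup_cons, List.mem_cons, List.not_mem_nil, List.nodup_nil, or_false, not_or]
  refine ⟨⟨?_, ?_, ?_⟩, ⟨?_, ?_⟩, ?_, ?_, ?_⟩ <;>
    first | trivial | exact pt_ne_pt (by omega) (by omega) (by omega)

theorem antipodalSwap_mem_fiberSubgroup (p : ℕ) : antipodalSwap s p ∈ fiberSubgroup block :=
  swap_mem_fiberSubgroup (by rw [block_pt, block_pt, Nat.cast_add, ZMod.natCast_self, add_zero])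

def doubleSwap (s : ℕ) [NeZero s] : Perm (Fin (4 * s)) :=
  antipodalSwap s (s - 1) * antipodalSwap s (2 * s - 1)

theorem swap_mul_swap_eq_doubleSwap :
    swap ⟨2 * s - 2, by have := Nat.pos_of_neZero s; omega⟩
      ⟨2 * s - 1, by have := Nat.pos_of_neZero s; omega⟩ *
      swap ⟨4 * s - 2, by have := Nat.pos_of_neZero s; omega⟩
      ⟨4 * s - 1, by have := Nat.pos_of_neZero s; omega⟩ = doubleSwap s := by
  have hs := Nat.pos_of_neZero s
  simp only [doubleSwap, antipodalSwap]
  congr 2 <;> apply Fin.ext <;> simp only [pt] <;> rw [Nat.mod_eq_of_lt (by omega)] <;>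
    split_ifs <;> omega

theorem apply_pt_of_forall_val_apply {b : Perm (Fin (4 * s))}
    (hb : ∀ i : Fin (4 * s), (b i : ℕ) =
      if (i : ℕ) % 2 = 0 then (if (i : ℕ) = 4 * s - 2 then 1 else (i : ℕ) + 2)
      else (if (i : ℕ) = 4 * s - 1 then 0 else (i : ℕ) + 2)) (p : ℕ) :
    b (pt s p) = pt s (p + 1) := by
  have hs := Nat.pos_of_neZero s
  have hp := Nat.mod_lt p (Nat.pos_of_neZero (4 * s))
  have hsucc : (p + 1) % (4 * s) = if p % (4 * s) = 4 * s - 1 then 0 else p % (4 * s) + 1 := by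
    rw [Nat.add_mod, Nat.one_mod_eq_one.mpr (by omega)]
    split_ifs with h
    · rw [h, Nat.sub_add_cancel (by omega), Nat.mod_self]
    · exact Nat.mod_eq_of_lt (by omega)
  apply Fin.ext
  rw [hb]
  simp only [pt, hsucc]
  split_ifs <;> omega

/-- The paper's `a^{b^i}`. -/
def conjSwap (b : Perm (Fin (4 * s))) (i : ℕ) : Perm (Fin (4 * s)) :=
  b ^ i * doubleSwap s * (b ^ i)⁻¹

section Subgroups

variable (b : Perm (Fin (4 * s)))

local notation "N" => closure (Set.range (conjSwap b))
local notation "R" => closure ({doubleSwap s, b} : Set (Perm (Fin (4 * s))))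

theorem conjSwap_succ (i : ℕ) : b * conjSwap b i * b⁻¹ = conjSwap b (i + 1) := by
  simp only [conjSwap, pow_succ']
  group

theorem conjSwap_add (i j : ℕ) : conjSwap b (i + j) = b ^ i * conjSwap b j * (b ^ i)⁻¹ := by
  simp only [conjSwap, pow_add]
  group

theorem doubleSwap_mem_closure_conjSwap : doubleSwap s ∈ N :=
  subset_closure ⟨0, by simp [conjSwap]⟩

theorem closure_conjSwap_le : N ≤ R := by
  have hbR : b ∈ R := subset_closure (Set.mem_insert_of_mem _ rfl)
  rw [closure_le]
  rintro _ ⟨i, rfl⟩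
  exact mul_mem (mul_mem (pow_mem hbR i) (subset_closure (Set.mem_insert _ _)))
    (inv_mem (pow_mem hbR i))

theorem closure_pair_le_zpowers_sup : R ≤ zpowers b ⊔ N := by
  rw [closure_le, Set.insert_subset_iff, Set.singleton_subset_iff]
  exact ⟨mem_sup_right (doubleSwap_mem_closure_conjSwap b), mem_sup_left (mem_zpowers b)⟩

variable {b} (hb : ∀ p, b (pt s p) = pt s (p + 1))
include hb

theorem pow_apply_pt (k p : ℕ) : (b ^ k) (pt s p) = pt s (p + k) := by
  induction k generalizing p with
  | zero => rfl
  | succ k ih => rw [pow_succ, Perm.mul_apply, hb, ih, add_right_comm, add_assoc]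

theorem block_apply (x : Fin (4 * s)) : block (b x) = block x + 1 := by
  obtain ⟨q, -, -, rfl⟩ := exists_pt_eq 0 x
  rw [hb, block_pt, block_pt, Nat.cast_succ]

theorem conj_antipodalSwap (k p : ℕ) :
    b ^ k * antipodalSwap s p * (b ^ k)⁻¹ = antipodalSwap s (p + k) := by
  rw [antipodalSwap, ← swap_apply_apply, pow_apply_pt hb, pow_apply_pt hb, antipodalSwap,
    add_right_comm]

theorem conjSwap_eq (i : ℕ) :
    conjSwap b i = antipodalSwap s (s - 1 + i) * antipodalSwap s (2 * s - 1 + i) := by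
  rw [conjSwap, doubleSwap, ← MulAut.conj_apply, map_mul, MulAut.conj_apply, MulAut.conj_apply,
    conj_antipodalSwap hb, conj_antipodalSwap hb]

theorem conjSwap_periodic : Function.Periodic (conjSwap b) s := by
  intro i
  have hs := Nat.pos_of_neZero s
  have hcycle : conjSwap b s = doubleSwap s := by
    rw [conjSwap_eq hb, show 2 * s - 1 + s = (s - 1) + 2 * s by omega,
      antipodalSwap_add_two_mul, show s - 1 + s = 2 * s - 1 by omega, doubleSwap]
    exact (commute_antipodalSwap (by omega) (by omega) (by omega)).eq
  rw [conjSwap_add, hcycle]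
  rfl

/-- Positions are taken in the window `[s-1, 5s-1)`, which contains the four positions moved by
each `conjSwap b i` with `i < s`. -/
theorem conjSwap_apply {i q : ℕ} (hi : i < s) (hq₁ : s - 1 ≤ q) (hq₂ : q < 5 * s - 1) :
    conjSwap b i (pt s q) =
      if q = s - 1 + i ∨ q = 2 * s - 1 + i ∨ q = 3 * s - 1 + i ∨ q = 4 * s - 1 + i
      then pt s (q + 2 * s) else pt s q := by
  rw [conjSwap_eq hb, Perm.mul_apply]
  split_ifs with hq
  · rcases hq with rfl | rfl | rfl | rfl
    · rw [antipodalSwap_apply_of_ne (by omega) (by omega) (by omega) (by omega),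
        antipodalSwap_apply_left]
    · rw [antipodalSwap_apply_left,
        antipodalSwap_apply_of_ne (by omega) (by omega) (by omega) (by omega)]
    · rw [antipodalSwap_apply_of_ne (by omega) (by omega) (by omega) (by omega),
        show 3 * s - 1 + i = s - 1 + i + 2 * s by omega, antipodalSwap_apply_right,
        pt_add_two_mul_add_two_mul]
    · rw [show 4 * s - 1 + i = 2 * s - 1 + i + 2 * s by omega, antipodalSwap_apply_right,
        antipodalSwap_apply_of_ne (by omega) (by omega) (by omega) (by omega),
        pt_add_two_mul_add_two_mul]
  · rw [antipodalSwap_apply_of_ne (by omega) (by omega) (by omega) (by omega),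
      antipodalSwap_apply_of_ne (by omega) (by omega) (by omega) (by omega)]

theorem conjSwap_apply_pt_ne {i : ℕ} (hi : i < s) :
    conjSwap b i (pt s (s - 1 + i)) ≠ pt s (s - 1 + i) := by
  rw [conjSwap_apply hb hi (by omega) (by omega), if_pos (Or.inl rfl)]
  exact pt_ne_pt (by omega) (by omega) (by omega)

theorem conjSwap_apply_pt_of_ne {i j : ℕ} (hi : i < s) (hj : j < s) (hij : i ≠ j) :
    conjSwap b j (pt s (s - 1 + i)) = pt s (s - 1 + i) := by
  rw [conjSwap_apply hb hj (by omega) (by omega), if_neg (by omega)]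

theorem orderOf_conjSwap {i : ℕ} (hi : i < s) : orderOf (conjSwap b i) = 2 := by
  refine orderOf_eq_prime ?_ fun h => conjSwap_apply_pt_ne hb hi (by rw [h]; rfl)
  have hs := Nat.pos_of_neZero s
  rw [conjSwap_eq hb, (commute_antipodalSwap (by omega) (by omega) (by omega)).mul_pow,
    antipodalSwap, antipodalSwap, pow_two, pow_two, swap_mul_self, swap_mul_self, one_mul]

theorem commute_conjSwap {i j : ℕ} (hi : i < s) (hj : j < s) (hij : i ≠ j) :
    Commute (conjSwap b i) (conjSwap b j) := by
  refine Perm.Disjoint.commute fun x => ?_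
  obtain ⟨q, hq₁, hq₂, rfl⟩ := exists_pt_eq (s - 1) x
  rw [conjSwap_apply hb hi hq₁ (by omega), conjSwap_apply hb hj hq₁ (by omega)]
  by_cases hq : q = s - 1 + i ∨ q = 2 * s - 1 + i ∨ q = 3 * s - 1 + i ∨ q = 4 * s - 1 + i
  · exact Or.inr (if_neg (by omega))
  · exact Or.inl (if_neg hq)

theorem prod_conjSwap_apply {k q : ℕ} (hk : k ≤ s) (hq₁ : s - 1 ≤ q)
    (hq₂ : q < 5 * s - 1) :
    ((List.range k).map (conjSwap b)).prod (pt s q) =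
      if q < s - 1 + k ∨ (2 * s - 1 ≤ q ∧ q < 2 * s - 1 + k) ∨
        (3 * s - 1 ≤ q ∧ q < 3 * s - 1 + k) ∨ 4 * s - 1 ≤ q ∧ q < 4 * s - 1 + k
      then pt s (q + 2 * s) else pt s q := by
  induction k generalizing q with
  | zero =>
    rw [List.range_zero, List.map_nil, List.prod_nil, if_neg (by omega)]
    rfl
  | succ k ih =>
    rw [List.prod_range_succ, Perm.mul_apply, conjSwap_apply hb (by omega) hq₁ hq₂]
    split_ifs with hmove hnew hnew
    · by_cases hlow : q < 3 * s - 1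
      · rw [ih (by omega) (by omega) (by omega), if_neg (by omega)]
      · rw [show q + 2 * s = q - 2 * s + 4 * s by omega, pt_add_four_mul,
          ih (by omega) (by omega) (by omega), if_neg (by omega)]
    · omega
    · rw [ih (by omega) hq₁ hq₂, if_pos (by omega)]
    · rw [ih (by omega) hq₁ hq₂, if_neg (by omega)]

theorem pow_two_mul_eq_prod_conjSwap :
    b ^ (2 * s) = ((List.range s).map (conjSwap b)).prod := by
  ext1 x
  obtain ⟨q, hq₁, hq₂, rfl⟩ := exists_pt_eq (s - 1) x
  rw [pow_apply_pt hb, prod_conjSwap_apply hb le_rfl hq₁ (by omega), if_pos (by omega)]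

theorem pow_two_mul_mem_closure_conjSwap : b ^ (2 * s) ∈ N := by
  rw [pow_two_mul_eq_prod_conjSwap hb]
  exact list_prod_mem fun x hx => by
    obtain ⟨i, -, rfl⟩ := List.mem_map.mp hx
    exact subset_closure ⟨i, rfl⟩

theorem range_fin_conjSwap :
    Set.range (fun i : Fin s => conjSwap b i) = Set.range (conjSwap b) := by
  refine Set.Subset.antisymm (Set.range_subset_iff.mpr fun i => ⟨i, rfl⟩) ?_
  rintro _ ⟨i, rfl⟩
  refine ⟨⟨i % s, Nat.mod_lt _ (Nat.pos_of_neZero s)⟩, ?_⟩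
  change conjSwap b (i % s) = conjSwap b i
  rw [← (conjSwap_periodic hb).nat_mul (i / s) (i % s), Nat.cast_id, Nat.mod_add_div']

theorem setOf_eq_range_conjSwap :
    {x | ∃ i : Fin s, x = b ^ (i : ℕ) * doubleSwap s * (b ^ (i : ℕ))⁻¹} =
      Set.range (conjSwap b) :=
  (Set.ext fun _ => exists_congr fun _ => eq_comm).trans (range_fin_conjSwap hb)

theorem nonempty_mulEquiv_closure_conjSwap :
    Nonempty (N ≃* Multiplicative (Fin s → ZMod 2)) := by
  obtain ⟨e⟩ := nonempty_closure_range_mulEquiv_of_separated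
    (g := fun i : Fin s => conjSwap b i) (x := fun i => pt s (s - 1 + i))
    (fun i j hij => commute_conjSwap hb i.2 j.2 (Fin.val_ne_of_ne hij))
    (fun i => orderOf_conjSwap hb i.2) (fun i => conjSwap_apply_pt_ne hb i.2)
    (fun i j hji => conjSwap_apply_pt_of_ne hb i.2 j.2 (Fin.val_ne_of_ne hji.symm))
  exact ⟨(MulEquiv.subgroupCongr (congrArg Subgroup.closure (range_fin_conjSwap hb))).symm.trans
    e⟩

theorem card_closure_conjSwap : Nat.card N = 2 ^ s := by
  obtain ⟨e⟩ := nonempty_mulEquiv_closure_conjSwap hb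
  rw [Nat.card_congr e.toEquiv, Nat.card_congr Multiplicative.toAdd, Nat.card_fun, Nat.card_zmod,
    Nat.card_eq_fintype_card, Fintype.card_fin]

theorem mem_normalizer_range_conjSwap : b ∈ normalizer (Set.range (conjSwap b)) := by
  refine mem_set_normalizer_iff.mpr fun x => ⟨?_, ?_⟩
  · rintro ⟨i, rfl⟩
    exact ⟨i + 1, (conjSwap_succ b i).symm⟩
  · rintro ⟨i, hi⟩
    obtain ⟨j, hj⟩ : ∃ j, i + s = j + 1 :=
      ⟨i + s - 1, by have := Nat.pos_of_neZero s; omega⟩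
    rw [← conjSwap_periodic hb i, hj, ← conjSwap_succ] at hi
    exact ⟨j, mul_left_cancel (mul_right_cancel hi)⟩

theorem closure_pair_le_normalizer : R ≤ normalizer (N : Set (Perm (Fin (4 * s)))) := by
  rw [closure_le, Set.insert_subset_iff, Set.singleton_subset_iff]
  exact ⟨le_normalizer (doubleSwap_mem_closure_conjSwap b),
    normalizer_le_normalizer_closure _ (mem_normalizer_range_conjSwap hb)⟩

theorem closure_conjSwap_le_fiberSubgroup : N ≤ fiberSubgroup block := by
  rw [closure_le]
  rintro _ ⟨i, rfl⟩
  rw [conjSwap_eq hb]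
  exact mul_mem (antipodalSwap_mem_fiberSubgroup _) (antipodalSwap_mem_fiberSubgroup _)

theorem closure_pair_le_shiftSubgroup : R ≤ shiftSubgroup block := by
  rw [closure_le, Set.insert_subset_iff, Set.singleton_subset_iff]
  exact ⟨fiberSubgroup_le_shiftSubgroup (closure_conjSwap_le_fiberSubgroup hb
    (doubleSwap_mem_closure_conjSwap b)), 1, block_apply hb⟩

def blockShift : R →* Multiplicative (ZMod (2 * s)) :=
  (shiftHom block (pt s 0)).comp (inclusion (closure_pair_le_shiftSubgroup hb))

theorem blockShift_zpow (k : ℤ) :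
    blockShift hb (⟨b, subset_closure (Set.mem_insert_of_mem _ rfl)⟩ ^ k) =
      Multiplicative.ofAdd (k : ZMod (2 * s)) := by
  rw [map_zpow, blockShift, MonoidHom.comp_apply, shiftHom_apply (c := 1) (block_apply hb),
    ← ofAdd_zsmul, zsmul_one]

theorem blockShift_eq_one {x : R} (hx : (x : Perm (Fin (4 * s))) ∈ N) : blockShift hb x = 1 := by
  rw [blockShift, MonoidHom.comp_apply, shiftHom_apply (c := 0)
    (fun y => ((closure_conjSwap_le_fiberSubgroup hb hx y).trans (add_zero _).symm)),
    ofAdd_zero]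

/-- An element `b^k n` of `R = ⟨b⟩N` shifts the blocks by `k`, so it lies in the kernel only
when `2s ∣ k`, and then `b^k ∈ N`. -/
theorem ker_blockShift : (blockShift hb).ker = (N).subgroupOf R := by
  ext x
  rw [MonoidHom.mem_ker, mem_subgroupOf]
  refine ⟨fun hx => ?_, blockShift_eq_one hb⟩
  have hbN : zpowers b ≤ normalizer (N : Set (Perm (Fin (4 * s)))) :=
    zpowers_le.mpr (normalizer_le_normalizer_closure _ (mem_normalizer_range_conjSwap hb))
  have hx₀ : (x : Perm (Fin (4 * s))) ∈
      (zpowers b : Set (Perm (Fin (4 * s)))) * (N : Set (Perm (Fin (4 * s)))) := by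
    rw [← coe_mul_of_left_le_normalizer_right _ _ hbN]
    exact closure_pair_le_zpowers_sup b x.2
  obtain ⟨_, ⟨k, rfl⟩, n, hn, hx'⟩ := hx₀
  dsimp only at hx'
  have hsplit : x = ⟨b, subset_closure (Set.mem_insert_of_mem _ rfl)⟩ ^ k *
      ⟨n, closure_conjSwap_le b hn⟩ := Subtype.ext hx'.symm
  rw [hsplit, map_mul, blockShift_zpow, blockShift_eq_one hb hn, mul_one, ofAdd_eq_one,
    ZMod.intCast_zmod_eq_zero_iff_dvd] at hx
  obtain ⟨t, rfl⟩ := hx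
  rw [← hx', zpow_mul, zpow_natCast]
  exact mul_mem (zpow_mem (pow_two_mul_mem_closure_conjSwap hb) t) hn

theorem zpowers_blockShift :
    zpowers (blockShift hb ⟨b, subset_closure (Set.mem_insert_of_mem _ rfl)⟩) = ⊤ := by
  refine eq_top_iff.mpr fun y _ => ?_
  obtain ⟨k, hk⟩ := ZMod.intCast_surjective (Multiplicative.toAdd y)
  exact mem_zpowers_iff.mpr ⟨k, by rw [← map_zpow, blockShift_zpow, hk, ofAdd_toAdd]⟩

theorem blockShift_surjective : Function.Surjective (blockShift hb) := by
  rw [← MonoidHom.range_eq_top, eq_top_iff, ← zpowers_blockShift hb, zpowers_le]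
  exact ⟨_, rfl⟩

theorem card_closure_pair : Nat.card R = 2 ^ (s + 1) * s := by
  rw [card_eq_card_quotient_mul_card_subgroup (blockShift hb).ker,
    Nat.card_congr (QuotientGroup.quotientKerEquivOfSurjective _
      (blockShift_surjective hb)).toEquiv,
    Nat.card_congr Multiplicative.toAdd, Nat.card_zmod, ker_blockShift hb,
    Nat.card_congr (subgroupOfEquivOfLe (closure_conjSwap_le b)).toEquiv,
    card_closure_conjSwap hb, pow_succ]
  ring

end Subgroups

end CycleDoubleSwaps

open CycleDoubleSwaps

theorem stmt5 (s : ℕ) (hs : 2 ≤ s)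
    (a b : Equiv.Perm (Fin (4 * s)))
    (ha : a = Equiv.swap ⟨2 * s - 2, by omega⟩ ⟨2 * s - 1, by omega⟩ *
      Equiv.swap ⟨4 * s - 2, by omega⟩ ⟨4 * s - 1, by omega⟩)
    (hb : ∀ i : Fin (4 * s), (b i : ℕ) =
      if (i : ℕ) % 2 = 0 then (if (i : ℕ) = 4 * s - 2 then 1 else (i : ℕ) + 2)
      else (if (i : ℕ) = 4 * s - 1 then 0 else (i : ℕ) + 2)) :
    (∀ i : Fin s, orderOf (b ^ (i : ℕ) * a * (b ^ (i : ℕ))⁻¹) = 2) ∧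
    Nonempty
      (↥(Subgroup.closure {x : Equiv.Perm (Fin (4 * s)) |
          ∃ i : Fin s, x = b ^ (i : ℕ) * a * (b ^ (i : ℕ))⁻¹}) ≃*
        Multiplicative (Fin s → ZMod 2)) ∧
    Subgroup.closure {x : Equiv.Perm (Fin (4 * s)) |
        ∃ i : Fin s, x = b ^ (i : ℕ) * a * (b ^ (i : ℕ))⁻¹} ≤
      Subgroup.closure {a, b} ∧
    (∀ r ∈ Subgroup.closure ({a, b} : Set (Equiv.Perm (Fin (4 * s)))),
      ∀ x ∈ Subgroup.closure {x : Equiv.Perm (Fin (4 * s)) |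
          ∃ i : Fin s, x = b ^ (i : ℕ) * a * (b ^ (i : ℕ))⁻¹},
        r * x * r⁻¹ ∈ Subgroup.closure {x : Equiv.Perm (Fin (4 * s)) |
          ∃ i : Fin s, x = b ^ (i : ℕ) * a * (b ^ (i : ℕ))⁻¹}) ∧
    (∃ φ : ↥(Subgroup.closure ({a, b} : Set (Equiv.Perm (Fin (4 * s))))) →*
        Multiplicative (ZMod (2 * s)),
      Function.Surjective φ ∧
      φ.ker = (Subgroup.closure {x : Equiv.Perm (Fin (4 * s)) |
          ∃ i : Fin s, x = b ^ (i : ℕ) * a * (b ^ (i : ℕ))⁻¹}).subgroupOf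
        (Subgroup.closure {a, b}) ∧
      Subgroup.zpowers (φ ⟨b, Subgroup.subset_closure (by simp)⟩) = ⊤) ∧
    Nat.card ↥(Subgroup.closure ({a, b} : Set (Equiv.Perm (Fin (4 * s))))) =
      2 ^ (s + 1) * s := by
  have : NeZero s := ⟨by omega⟩
  have hrot : ∀ p, b (pt s p) = pt s (p + 1) := apply_pt_of_forall_val_apply hb
  obtain rfl : a = doubleSwap s := ha.trans swap_mul_swap_eq_doubleSwap
  rw [setOf_eq_range_conjSwap hrot]
  exact ⟨fun i => orderOf_conjSwap hrot i.2,
    nonempty_mulEquiv_closure_conjSwap hrot,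
    closure_conjSwap_le b,
    fun r hr x hx => (mem_normalizer_iff.mp (closure_pair_le_normalizer hrot hr) x).mp hx,
    ⟨blockShift hrot, blockShift_surjective hrot, ker_blockShift hrot, zpowers_blockShift hrot⟩,
    card_closure_pair hrot⟩
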